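/- arXiv:1607.00315 — 2 statements merged into one kernel-verified Lean document; each statement's English description precedes it below -/
import Mathlib

section
/- Let f: ℝⁿ → ℝ be C² convex with ‖∇²f(x)‖ ≤ M for all x, let λ > 0, and let F(x) = f(x) + λ‖x‖₁. Fix x ∈ ℝⁿ and let H be symmetric with H ⪰ γI for some γ > 0. Suppose z minimizes z ↦ ⟨∇f(x), z⟩ + (1/2)⟨z, Hz⟩ + λ‖x+z‖₁. Then for any α with 0 < α < 1, F(x) − F(x + αz) ≥ (1/2)α γ ‖z‖² − (1/2)α² M ‖z‖². -/
/-!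
Since `∇f` is `M`-Lipschitz, `f (x + αz) ≤ f x + α⟪∇f x, z⟫ + (M/2)α²‖z‖²`, and by convexity of
the `ℓ¹` term along the segment from `x` to `x + z`, `F (x + αz) - F x` is at most `α` times the
model decrease `⟪∇f x, z⟫ + λ‖x + z‖₁ - λ‖x‖₁` plus `(M/2)α²‖z‖²`. Comparing the model at `z` with
its value at `0` bounds the model decrease by `-(1/2)⟪z, Hz⟫ ≤ -(γ/2)‖z‖²`.
-/

open Set InnerProductSpace

section Smoothness

variable {E F : Type*} [NormedAddCommGroup E] [NormedSpace ℝ E]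
  [NormedAddCommGroup F] [NormedSpace ℝ F]

lemma norm_fderiv_sub_fderiv_le_of_norm_iteratedFDeriv_two_le {f : E → F} {M : ℝ}
    (hf : ContDiff ℝ 2 f) (hM : ∀ y, ‖iteratedFDeriv ℝ 2 f y‖ ≤ M) (y y' : E) :
    ‖fderiv ℝ f y - fderiv ℝ f y'‖ ≤ M * ‖y - y'‖ := by
  have hf' : Differentiable ℝ (fderiv ℝ f) :=
    (hf.fderiv_right (m := 1) le_rfl).differentiable one_ne_zero
  refine convex_univ.norm_image_sub_le_of_norm_fderiv_le (fun a _ => hf' a) (fun a _ => ?_)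
    (mem_univ _) (mem_univ _)
  calc ‖fderiv ℝ (fderiv ℝ f) a‖
      = ‖iteratedFDeriv ℝ 0 (fderiv ℝ (fderiv ℝ f)) a‖ := by rw [norm_iteratedFDeriv_zero]
    _ = ‖iteratedFDeriv ℝ 1 (fderiv ℝ f) a‖ := norm_iteratedFDeriv_fderiv
    _ = ‖iteratedFDeriv ℝ 2 f a‖ := norm_iteratedFDeriv_fderiv
    _ ≤ M := hM a

lemma le_add_fderiv_add_of_norm_fderiv_sub_le {f : E → ℝ} {M : ℝ} (hf : Differentiable ℝ f)
    (hlip : ∀ y y', ‖fderiv ℝ f y - fderiv ℝ f y'‖ ≤ M * ‖y - y'‖) (x v : E) :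
    f (x + v) ≤ f x + fderiv ℝ f x v + M / 2 * ‖v‖ ^ 2 := by
  set φ : ℝ → ℝ := fun t => f (x + t • v) - t * fderiv ℝ f x v - M / 2 * t ^ 2 * ‖v‖ ^ 2
  have hφ' : ∀ t, HasDerivAt φ
      (fderiv ℝ f (x + t • v) v - fderiv ℝ f x v - M * t * ‖v‖ ^ 2) t := by
    intro t
    have hline : HasDerivAt (fun t : ℝ => x + t • v) v t := by
      simpa using ((hasDerivAt_id t).smul_const v).const_add x
    have hquad := ((hasDerivAt_pow 2 t).const_mul (M / 2)).mul_const (‖v‖ ^ 2)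
    refine ((((hf _).hasFDerivAt.comp_hasDerivAt t hline).sub
      ((hasDerivAt_id t).mul_const (fderiv ℝ f x v))).sub hquad).congr_deriv ?_
    simp only [one_mul, Nat.cast_ofNat, pow_one, Nat.add_one_sub_one]
    ring
  have hslope : ∀ t, 0 ≤ t → fderiv ℝ f (x + t • v) v - fderiv ℝ f x v ≤ M * t * ‖v‖ ^ 2 := by
    intro t ht
    calc fderiv ℝ f (x + t • v) v - fderiv ℝ f x v
        ≤ ‖(fderiv ℝ f (x + t • v) - fderiv ℝ f x) v‖ := Real.le_norm_self _
      _ ≤ ‖fderiv ℝ f (x + t • v) - fderiv ℝ f x‖ * ‖v‖ := ContinuousLinearMap.le_opNorm _ _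
      _ ≤ M * ‖t • v‖ * ‖v‖ := by
        gcongr
        simpa using hlip (x + t • v) x
      _ = M * t * ‖v‖ ^ 2 := by rw [norm_smul, Real.norm_of_nonneg ht]; ring
  have hanti : AntitoneOn φ (Icc 0 1) :=
    antitoneOn_of_hasDerivWithinAt_nonpos (convex_Icc 0 1)
      (fun t _ => (hφ' t).continuousAt.continuousWithinAt) (fun t _ => (hφ' t).hasDerivWithinAt)
      (fun t ht => by linarith [hslope t (interior_subset ht).1])
  have := hanti (left_mem_Icc.2 zero_le_one) (right_mem_Icc.2 zero_le_one) zero_le_one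
  simp only [φ, zero_smul, one_smul, add_zero] at this
  linarith

end Smoothness

lemma convexOn_sum_abs (ι : Type*) [Fintype ι] :
    ConvexOn ℝ univ (fun y : EuclideanSpace ℝ ι => ∑ i, |y i|) := by
  refine ⟨convex_univ, fun y _ w _ a b ha hb _ => ?_⟩
  simp only [PiLp.add_apply, PiLp.smul_apply, smul_eq_mul, Finset.mul_sum,
    ← Finset.sum_add_distrib]
  gcongr with i
  calc |a * y i + b * w i| ≤ |a * y i| + |b * w i| := abs_add_le _ _
    _ = a * |y i| + b * |w i| := by rw [abs_mul, abs_mul, abs_of_nonneg ha, abs_of_nonneg hb]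

section ProxNewton

variable {E : Type*} [NormedAddCommGroup E] [InnerProductSpace ℝ E]

/-- The proximal Newton subproblem objective at `x`, with `g = ∇f x` and `H` a Hessian
approximation. -/
noncomputable def proxNewtonModel (g : E) (H : E →L[ℝ] E) (h : E → ℝ) (x w : E) : ℝ :=
  inner ℝ g w + 1 / 2 * inner ℝ w (H w) + h (x + w)

lemma descent_of_isMinOn_proxNewtonModel {f h : E → ℝ} {g x z : E} {H : E →L[ℝ] E}
    {M γ α : ℝ} (hf : ∀ v, f (x + v) ≤ f x + inner ℝ g v + M / 2 * ‖v‖ ^ 2)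
    (hh : ConvexOn ℝ univ h) (hH : γ * ‖z‖ ^ 2 ≤ inner ℝ z (H z))
    (hz : IsMinOn (proxNewtonModel g H h x) univ z) (hα0 : 0 ≤ α) (hα1 : α ≤ 1) :
    1 / 2 * α * γ * ‖z‖ ^ 2 - 1 / 2 * α ^ 2 * M * ‖z‖ ^ 2
      ≤ (f x + h x) - (f (x + α • z) + h (x + α • z)) := by
  have hmodel : inner ℝ g z + 1 / 2 * inner ℝ z (H z) + h (x + z) ≤ h x := by
    simpa [proxNewtonModel] using hz (mem_univ 0)
  have hsmooth : f (x + α • z) ≤ f x + α * inner ℝ g z + M / 2 * (α ^ 2 * ‖z‖ ^ 2) := by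
    simpa [real_inner_smul_right, norm_smul, mul_pow, abs_of_nonneg hα0] using hf (α • z)
  have hsegment : h (x + α • z) ≤ (1 - α) * h x + α * h (x + z) := by
    rw [show x + α • z = (1 - α) • x + α • (x + z) by module]
    exact hh.2 (mem_univ x) (mem_univ (x + z)) (sub_nonneg.2 hα1) hα0 (sub_add_cancel 1 α)
  linarith [mul_le_mul_of_nonneg_left hmodel hα0, mul_le_mul_of_nonneg_left hH hα0]

end ProxNewton

theorem prox_newton_descent_general (n : ℕ) (f : EuclideanSpace ℝ (Fin n) → ℝ) (M lam γ : ℝ)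
    (hf : ContDiff ℝ 2 f)
    (hM : ∀ y, ‖iteratedFDeriv ℝ 2 f y‖ ≤ M) (hlam : 0 < lam)
    (x z : EuclideanSpace ℝ (Fin n))
    (H : EuclideanSpace ℝ (Fin n) →L[ℝ] EuclideanSpace ℝ (Fin n))
    (hH : ∀ v : EuclideanSpace ℝ (Fin n), γ * ‖v‖^2 ≤ (inner ℝ v (H v) : ℝ))
    (hz : ∀ w : EuclideanSpace ℝ (Fin n),
      (inner ℝ (gradient f x) z : ℝ) + (1/2) * (inner ℝ z (H z) : ℝ) + lam * ∑ i, |x i + z i|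
        ≤ (inner ℝ (gradient f x) w : ℝ) + (1/2) * (inner ℝ w (H w) : ℝ) + lam * ∑ i, |x i + w i|)
    (α : ℝ) (hα0 : 0 < α) (hα1 : α < 1) :
    (1/2) * α * γ * ‖z‖^2 - (1/2) * α^2 * M * ‖z‖^2
      ≤ (f x + lam * ∑ i, |x i|) - (f (x + α • z) + lam * ∑ i, |(x + α • z) i|) := by
  have hsmooth (v : EuclideanSpace ℝ (Fin n)) :
      f (x + v) ≤ f x + inner ℝ (gradient f x) v + M / 2 * ‖v‖ ^ 2 := by
    rw [inner_gradient_left]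
    exact le_add_fderiv_add_of_norm_fderiv_sub_le (hf.differentiable two_ne_zero)
      (norm_fderiv_sub_fderiv_le_of_norm_iteratedFDeriv_two_le hf hM) x v
  refine descent_of_isMinOn_proxNewtonModel (h := fun y => lam * ∑ i, |y i|) hsmooth
    (ConvexOn.smul hlam.le (convexOn_sum_abs (Fin n))) (hH z) (fun w _ => ?_) hα0.le hα1.le
  simpa [proxNewtonModel] using hz w

/-- Descent lemma for the proximal Newton step: if `z` minimizes the quadratic
`l1` subproblem at `x` with `H ⪰ γI`, then for `0 < α < 1`,
`F(x) − F(x + αz) ≥ (1/2)αγ‖z‖² − (1/2)α²M‖z‖²`, where `F(x) = f(x) + λ‖x‖₁`. -/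
theorem prox_newton_descent (n : ℕ) (f : EuclideanSpace ℝ (Fin n) → ℝ) (M lam γ : ℝ)
    (hconv : ConvexOn ℝ Set.univ f) (hf : ContDiff ℝ 2 f)
    (hM : ∀ y, ‖iteratedFDeriv ℝ 2 f y‖ ≤ M) (hlam : 0 < lam) (hγ : 0 < γ)
    (x z : EuclideanSpace ℝ (Fin n))
    (H : EuclideanSpace ℝ (Fin n) →L[ℝ] EuclideanSpace ℝ (Fin n))
    (hsym : ∀ u v : EuclideanSpace ℝ (Fin n), (inner ℝ (H u) v : ℝ) = inner ℝ u (H v))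
    (hH : ∀ v : EuclideanSpace ℝ (Fin n), γ * ‖v‖^2 ≤ (inner ℝ v (H v) : ℝ))
    (hz : ∀ w : EuclideanSpace ℝ (Fin n),
      (inner ℝ (gradient f x) z : ℝ) + (1/2) * (inner ℝ z (H z) : ℝ) + lam * ∑ i, |x i + z i|
        ≤ (inner ℝ (gradient f x) w : ℝ) + (1/2) * (inner ℝ w (H w) : ℝ) + lam * ∑ i, |x i + w i|)
    (α : ℝ) (hα0 : 0 < α) (hα1 : α < 1) :
    (1/2) * α * γ * ‖z‖^2 - (1/2) * α^2 * M * ‖z‖^2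
      ≤ (f x + lam * ∑ i, |x i|) - (f (x + α • z) + lam * ∑ i, |(x + α • z) i|) :=
  prox_newton_descent_general n f M lam γ hf hM hlam x z H hH hz α hα0 hα1
end

section
/- Under the hypotheses of the descent lemma (f C² convex with Hessian bounded by M, H ⪰ γI ≻ 0, z the minimizer of the quadratic l1 subproblem at x), for any 0 < α < γ/M with α < 1, the step x ↦ x + αz strictly decreases F(x) = f(x) + λ‖x‖₁ whenever z ≠ 0; i.e., F(x + αz) < F(x). -/
/-!
Minimality of `z` against the competitor `w = 0` gives
`⟪∇f x, z⟫ + λ (‖x + z‖₁ - ‖x‖₁) ≤ -½ ⟪z, H z⟫ ≤ -½ γ ‖z‖²`.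
The Hessian bound makes `∇f` `M`-Lipschitz, so `f (x + α z) ≤ f x + α ⟪∇f x, z⟫ + ½ M α² ‖z‖²`,
and convexity of `‖·‖₁` gives `‖x + α z‖₁ ≤ (1 - α) ‖x‖₁ + α ‖x + z‖₁` for `α ≤ 1`. Adding up,
`F (x + α z) - F x ≤ ½ α (α M - γ) ‖z‖² < 0`.
-/

open Set

section

variable {E : Type*} [NormedAddCommGroup E] [NormedSpace ℝ E]

theorem ContDiff.norm_fderiv_sub_le_of_norm_iteratedFDeriv_two_le {F : Type*}
    [NormedAddCommGroup F] [NormedSpace ℝ F] {f : E → F} {M : ℝ} (hf : ContDiff ℝ 2 f)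
    (hM : ∀ y, ‖iteratedFDeriv ℝ 2 f y‖ ≤ M) (x y : E) :
    ‖fderiv ℝ f y - fderiv ℝ f x‖ ≤ M * ‖y - x‖ := by
  have hdiff : Differentiable ℝ (fderiv ℝ f) :=
    (hf.fderiv_right (m := 1) le_rfl).differentiable one_ne_zero
  have hbound : ∀ u, ‖fderiv ℝ (fderiv ℝ f) u‖ ≤ M := fun u => by
    rw [← norm_iteratedFDeriv_zero (𝕜 := ℝ) (f := fderiv ℝ (fderiv ℝ f)),
      norm_iteratedFDeriv_fderiv, norm_iteratedFDeriv_fderiv]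
    exact hM u
  exact convex_univ.norm_image_sub_le_of_norm_hasFDerivWithin_le
    (fun u _ => (hdiff u).hasFDerivAt.hasFDerivWithinAt) (fun u _ => hbound u)
    (mem_univ x) (mem_univ y)

theorem le_add_fderiv_add_sq_of_norm_fderiv_sub_le {f : E → ℝ} {L : ℝ} {x : E}
    (hf : Differentiable ℝ f) (hlip : ∀ y, ‖fderiv ℝ f y - fderiv ℝ f x‖ ≤ L * ‖y - x‖)
    (v : E) : f (x + v) ≤ f x + fderiv ℝ f x v + L / 2 * ‖v‖ ^ 2 := by
  set φ : ℝ → ℝ := fun t => f (x + t • v) - t * fderiv ℝ f x v - L / 2 * ‖v‖ ^ 2 * t ^ 2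
  have hφ : ∀ t, HasDerivAt φ
      (fderiv ℝ f (x + t • v) v - fderiv ℝ f x v - L * ‖v‖ ^ 2 * t) t := fun t => by
    have hpath : HasDerivAt (fun s : ℝ => x + s • v) v t := by
      simpa using ((hasDerivAt_id t).smul_const v).const_add x
    refine ((((hf _).hasFDerivAt.comp_hasDerivAt t hpath).sub
      ((hasDerivAt_id t).mul_const (fderiv ℝ f x v))).sub
      ((hasDerivAt_pow 2 t).const_mul (L / 2 * ‖v‖ ^ 2))).congr_deriv ?_
    ring
  have hφ'_nonpos : ∀ t ∈ interior (Icc (0 : ℝ) 1),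
      fderiv ℝ f (x + t • v) v - fderiv ℝ f x v - L * ‖v‖ ^ 2 * t ≤ 0 := fun t ht => by
    rw [interior_Icc] at ht
    calc fderiv ℝ f (x + t • v) v - fderiv ℝ f x v - L * ‖v‖ ^ 2 * t
        ≤ ‖fderiv ℝ f (x + t • v) - fderiv ℝ f x‖ * ‖v‖ - L * ‖v‖ ^ 2 * t := by
          gcongr
          exact (Real.le_norm_self _).trans ((fderiv ℝ f (x + t • v) - fderiv ℝ f x).le_opNorm v)
      _ ≤ L * ‖t • v‖ * ‖v‖ - L * ‖v‖ ^ 2 * t := by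
          gcongr
          simpa using hlip (x + t • v)
      _ = 0 := by rw [norm_smul, Real.norm_of_nonneg ht.1.le]; ring
  have hanti := antitoneOn_of_hasDerivWithinAt_nonpos (convex_Icc 0 1)
    (fun t _ => (hφ t).continuousAt.continuousWithinAt)
    (fun t _ => (hφ t).hasDerivWithinAt) hφ'_nonpos
  have := hanti (left_mem_Icc.mpr zero_le_one) (right_mem_Icc.mpr zero_le_one) zero_le_one
  simp only [φ, zero_smul, one_smul, add_zero] at this
  linarith

end

theorem sum_abs_add_mul_le {ι : Type*} [Fintype ι] (x z : ι → ℝ) {c : ℝ} (hc0 : 0 ≤ c)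
    (hc1 : c ≤ 1) :
    ∑ i, |x i + c * z i| ≤ (1 - c) * ∑ i, |x i| + c * ∑ i, |x i + z i| := by
  rw [Finset.mul_sum, Finset.mul_sum, ← Finset.sum_add_distrib]
  refine Finset.sum_le_sum fun i _ => ?_
  calc |x i + c * z i| = |(1 - c) * x i + c * (x i + z i)| := by ring_nf
    _ ≤ |(1 - c) * x i| + |c * (x i + z i)| := abs_add_le _ _
    _ = (1 - c) * |x i| + c * |x i + z i| := by
        rw [abs_mul, abs_mul, abs_of_nonneg (sub_nonneg.mpr hc1), abs_of_nonneg hc0]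

theorem prox_newton_strict_decrease_general (n : ℕ) (f : EuclideanSpace ℝ (Fin n) → ℝ) (M lam γ : ℝ)
    (hf : ContDiff ℝ 2 f)
    (hM : ∀ y, ‖iteratedFDeriv ℝ 2 f y‖ ≤ M) (hM0 : 0 < M) (hlam : 0 < lam)
    (x z : EuclideanSpace ℝ (Fin n))
    (H : EuclideanSpace ℝ (Fin n) →L[ℝ] EuclideanSpace ℝ (Fin n))
    (hH : ∀ v : EuclideanSpace ℝ (Fin n), γ * ‖v‖^2 ≤ (inner ℝ v (H v) : ℝ))
    (hz : ∀ w : EuclideanSpace ℝ (Fin n),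
      (inner ℝ (gradient f x) z : ℝ) + (1/2) * (inner ℝ z (H z) : ℝ) + lam * ∑ i, |x i + z i|
        ≤ (inner ℝ (gradient f x) w : ℝ) + (1/2) * (inner ℝ w (H w) : ℝ) + lam * ∑ i, |x i + w i|)
    (hz0 : z ≠ 0)
    (α : ℝ) (hα0 : 0 < α) (hαM : α < γ / M) (hα1 : α < 1) :
    f (x + α • z) + lam * ∑ i, |(x + α • z) i| < f x + lam * ∑ i, |x i| := by
  have hsmooth : f (x + α • z) ≤ f x + α * inner ℝ (gradient f x) z + M / 2 * α ^ 2 * ‖z‖ ^ 2 := by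
    have := le_add_fderiv_add_sq_of_norm_fderiv_sub_le (hf.differentiable two_ne_zero)
      (hf.norm_fderiv_sub_le_of_norm_iteratedFDeriv_two_le hM x) (α • z)
    rw [map_smul, smul_eq_mul, ← inner_gradient_left, norm_smul, Real.norm_of_nonneg hα0.le]
      at this
    linarith
  have hl1 : ∑ i, |(x + α • z) i| ≤ (1 - α) * ∑ i, |x i| + α * ∑ i, |x i + z i| := by
    simpa using sum_abs_add_mul_le (⇑x) (⇑z) hα0.le hα1.le
  have hoptimal : inner ℝ (gradient f x) z + (1 / 2) * inner ℝ z (H z) + lam * ∑ i, |x i + z i|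
      ≤ lam * ∑ i, |x i| := by
    simpa using hz 0
  have hαMγ : α * M < γ := (lt_div_iff₀ hM0).mp hαM
  have hz2 : 0 < ‖z‖ ^ 2 := pow_pos (norm_pos_iff.mpr hz0) 2
  linarith [mul_le_mul_of_nonneg_left hl1 hlam.le, mul_le_mul_of_nonneg_left hoptimal hα0.le,
    mul_le_mul_of_nonneg_left (hH z) hα0.le, mul_lt_mul_of_pos_right hαMγ (mul_pos hα0 hz2)]

/-- Strict decrease: under the descent-lemma hypotheses, for any `0 < α < γ/M`
with `α < 1`, the step `x ↦ x + αz` strictly decreases `F(x) = f(x) + λ‖x‖₁`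
whenever `z ≠ 0`. -/
theorem prox_newton_strict_decrease (n : ℕ) (f : EuclideanSpace ℝ (Fin n) → ℝ) (M lam γ : ℝ)
    (hconv : ConvexOn ℝ Set.univ f) (hf : ContDiff ℝ 2 f)
    (hM : ∀ y, ‖iteratedFDeriv ℝ 2 f y‖ ≤ M) (hM0 : 0 < M) (hlam : 0 < lam) (hγ : 0 < γ)
    (x z : EuclideanSpace ℝ (Fin n))
    (H : EuclideanSpace ℝ (Fin n) →L[ℝ] EuclideanSpace ℝ (Fin n))
    (hsym : ∀ u v : EuclideanSpace ℝ (Fin n), (inner ℝ (H u) v : ℝ) = inner ℝ u (H v))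
    (hH : ∀ v : EuclideanSpace ℝ (Fin n), γ * ‖v‖^2 ≤ (inner ℝ v (H v) : ℝ))
    (hz : ∀ w : EuclideanSpace ℝ (Fin n),
      (inner ℝ (gradient f x) z : ℝ) + (1/2) * (inner ℝ z (H z) : ℝ) + lam * ∑ i, |x i + z i|
        ≤ (inner ℝ (gradient f x) w : ℝ) + (1/2) * (inner ℝ w (H w) : ℝ) + lam * ∑ i, |x i + w i|)
    (hz0 : z ≠ 0)
    (α : ℝ) (hα0 : 0 < α) (hαM : α < γ / M) (hα1 : α < 1) :
    f (x + α • z) + lam * ∑ i, |(x + α • z) i| < f x + lam * ∑ i, |x i| :=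
  prox_newton_strict_decrease_general n f M lam γ hf hM hM0 hlam x z H hH hz hz0 α hα0 hαM hα1
end
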